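/- arXiv:1510.07938 — 4 statements merged into one kernel-verified Lean document; each statement's English description precedes it below -/
import Mathlib

section
/- Let 𝔤 be a perfect Lie algebra over a field k, D a derivation of 𝔤, and 𝔥 = 𝔤 ⋊_D k. If ω and ω' are 2-cocycles on 𝔥 that agree on 𝔤 × 𝔤 (i.e., ω((ξ,0),(η,0)) = ω'((ξ,0),(η,0)) for all ξ,η ∈ 𝔤), then ω = ω'. -/
/-! The difference `δ = ω - ω'` is an alternating 2-cocycle vanishing on `𝔤 × 𝔤`, so it is
determined by `ξ ↦ δ (ξ, 0) (0, 1)`. The cocycle identity at `(a, 0), (b, 0), (0, 1)` expresses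
`δ (⁅a, b⁆, 0) (0, 1)` through values on `𝔤 × 𝔤`, so this functional kills all brackets, hence
all of `𝔤` by perfectness. -/

section

variable {k V : Type*} [CommRing k] [AddCommGroup V] [Module k V]

theorem LinearMap.IsAlt.sub {ω ω' : V →ₗ[k] V →ₗ[k] k} (h : ω.IsAlt) (h' : ω'.IsAlt) :
    (ω - ω').IsAlt := by
  intro u
  simp [h u, h' u]

theorem LinearMap.IsAlt.eq_zero_of_inl_eq_zero {B : V × k →ₗ[k] V × k →ₗ[k] k} (hB : B.IsAlt)
    (h_inl : ∀ x y : V, B (x, 0) (y, 0) = 0) (h_inl_one : ∀ x : V, B (x, 0) (0, 1) = 0) :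
    B = 0 := by
  ext x y
  case hl.hl => exact h_inl x y
  case hl.hr => exact h_inl_one x
  case hr.hl => exact hB.eq_iff.mp (h_inl_one x)
  case hr.hr => exact hB (0, 1)

def IsTwoCocycle (br : V → V → V) (ω : V →ₗ[k] V →ₗ[k] k) : Prop :=
  ∀ u v w : V, ω (br u v) w + ω (br v w) u + ω (br w u) v = 0

theorem IsTwoCocycle.sub {br : V → V → V} {ω ω' : V →ₗ[k] V →ₗ[k] k}
    (h : IsTwoCocycle br ω) (h' : IsTwoCocycle br ω') : IsTwoCocycle br (ω - ω') := by
  intro u v w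
  simp only [LinearMap.sub_apply]
  linear_combination h u v w - h' u v w

end

section Semidirect

variable {k g : Type*} [CommRing k] [LieRing g] [LieAlgebra k g] {D : g →ₗ[k] g}
  {br : g × k → g × k → g × k}

theorem IsTwoCocycle.apply_lie_one_eq_zero
    (hbr : ∀ u v : g × k, br u v = (⁅u.1, v.1⁆ + u.2 • D v.1 - v.2 • D u.1, 0))
    {δ : g × k →ₗ[k] g × k →ₗ[k] k} (hδ : IsTwoCocycle br δ)
    (h_inl : ∀ x y : g, δ (x, 0) (y, 0) = 0) (a b : g) : δ (⁅a, b⁆, 0) (0, 1) = 0 := by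
  have h := hδ (a, 0) (b, 0) (0, 1)
  simp only [hbr, lie_zero, zero_lie, zero_smul, one_smul, zero_sub, sub_zero, add_zero,
    zero_add] at h
  rwa [h_inl, h_inl, add_zero, add_zero] at h

theorem IsTwoCocycle.apply_one_eq_zero_of_perfect
    (hbr : ∀ u v : g × k, br u v = (⁅u.1, v.1⁆ + u.2 • D v.1 - v.2 • D u.1, 0))
    (hperf : ∀ x : g, x ∈ Submodule.span k {z : g | ∃ a b : g, z = ⁅a, b⁆})
    {δ : g × k →ₗ[k] g × k →ₗ[k] k} (hδ : IsTwoCocycle br δ)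
    (h_inl : ∀ x y : g, δ (x, 0) (y, 0) = 0) (x : g) : δ (x, 0) (0, 1) = 0 := by
  have hspan : Submodule.span k {z : g | ∃ a b : g, z = ⁅a, b⁆} ≤
      LinearMap.ker ((δ.flip (0, 1)).comp (LinearMap.inl k g k)) := by
    rw [Submodule.span_le]
    rintro _ ⟨a, b, rfl⟩
    exact hδ.apply_lie_one_eq_zero hbr h_inl a b
  exact hspan (hperf x)

end Semidirect

theorem stmt1_general {k g : Type*} [Field k] [LieRing g] [LieAlgebra k g]
    (D : g →ₗ[k] g)
    (hperf : ∀ x : g, x ∈ Submodule.span k {z : g | ∃ a b : g, z = ⁅a, b⁆})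
    (br : g × k → g × k → g × k)
    (hbr : ∀ u v : g × k, br u v = (⁅u.1, v.1⁆ + u.2 • D v.1 - v.2 • D u.1, 0))
    (ω ω' : g × k →ₗ[k] g × k →ₗ[k] k)
    (halt : ∀ u : g × k, ω u u = 0)
    (hcoc : ∀ u v w : g × k, ω (br u v) w + ω (br v w) u + ω (br w u) v = 0)
    (halt' : ∀ u : g × k, ω' u u = 0)
    (hcoc' : ∀ u v w : g × k, ω' (br u v) w + ω' (br v w) u + ω' (br w u) v = 0)
    (hagree : ∀ ξ η : g, ω (ξ, 0) (η, 0) = ω' (ξ, 0) (η, 0)) :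
    ω = ω' := by
  have h_inl : ∀ x y : g, (ω - ω') (x, 0) (y, 0) = 0 := fun x y => by simp [hagree x y]
  have h_alt : (ω - ω').IsAlt := LinearMap.IsAlt.sub halt halt'
  have h_coc : IsTwoCocycle br (ω - ω') := IsTwoCocycle.sub hcoc hcoc'
  exact sub_eq_zero.mp <| h_alt.eq_zero_of_inl_eq_zero h_inl
    (h_coc.apply_one_eq_zero_of_perfect hbr hperf h_inl)

/-- For a perfect Lie algebra `𝔤` and derivation `D`, two 2-cocycles on `𝔤 ⋊_D k`
that agree on `𝔤 × 𝔤` are equal. -/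
theorem stmt1 {k g : Type*} [Field k] [LieRing g] [LieAlgebra k g]
    (D : g →ₗ[k] g) (hD : ∀ x y : g, D ⁅x, y⁆ = ⁅D x, y⁆ + ⁅x, D y⁆)
    (hperf : ∀ x : g, x ∈ Submodule.span k {z : g | ∃ a b : g, z = ⁅a, b⁆})
    (br : g × k → g × k → g × k)
    (hbr : ∀ u v : g × k, br u v = (⁅u.1, v.1⁆ + u.2 • D v.1 - v.2 • D u.1, 0))
    (ω ω' : g × k →ₗ[k] g × k →ₗ[k] k)
    (halt : ∀ u : g × k, ω u u = 0)
    (hcoc : ∀ u v w : g × k, ω (br u v) w + ω (br v w) u + ω (br w u) v = 0)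
    (halt' : ∀ u : g × k, ω' u u = 0)
    (hcoc' : ∀ u v w : g × k, ω' (br u v) w + ω' (br v w) u + ω' (br w u) v = 0)
    (hagree : ∀ ξ η : g, ω (ξ, 0) (η, 0) = ω' (ξ, 0) (η, 0)) :
    ω = ω' :=
  stmt1_general D hperf br hbr ω ω' halt hcoc halt' hcoc' hagree
end

section
/- Let 𝔨 be a finite-dimensional semisimple Lie algebra over a field of characteristic 0. Then the canonical map 𝔨 → ∏_{I ∈ Spec(𝔨)} 𝔨/I, where Spec(𝔨) is the (finite) set of maximal ideals of 𝔨, is an isomorphism of Lie algebras. -/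
/-!
The ideals of a finite-dimensional semisimple Lie algebra form a Boolean algebra whose atoms
are the finitely many simple ideals. Its coatoms, the maximal ideals, are the complements of
the atoms: there are finitely many of them and, the lattice being atomistic, their intersection
is zero. By distributivity a maximal ideal is comaximal with the intersection of the others, so
the Chinese remainder argument applies to the canonical map into the product of the quotients.
-/

open Function

theorem isCoatom_iff_forall_le_eq_or_eq_top {α : Type*} [PartialOrder α] [OrderTop α] {a : α} :
    IsCoatom a ↔ a ≠ ⊤ ∧ ∀ b, a ≤ b → b = a ∨ b = ⊤ := by
  refine ⟨fun ha => ⟨ha.1, fun b hab => ?_⟩, fun ⟨ha, h⟩ => ⟨ha, fun b hab => ?_⟩⟩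
  · exact (eq_or_lt_of_le hab).imp Eq.symm (ha.2 b)
  · exact (h b hab.le).resolve_left hab.ne'

theorem sInf_setOf_isCoatom_eq_bot {α : Type*} [CompleteLattice α] [IsModularLattice α]
    [ComplementedLattice α] [IsAtomistic α] : sInf {a : α | IsCoatom a} = ⊥ := by
  obtain ⟨s, hs, hsAtom⟩ := eq_sSup_atoms (sInf {a : α | IsCoatom a})
  refine hs.trans (sSup_eq_bot.mpr fun a ha => ?_)
  -- a complement of the atom `a` is a coatom, hence lies above `a`
  obtain ⟨c, hc⟩ := exists_isCompl a
  have hac : a ≤ c :=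
    (hs ▸ le_sSup ha).trans (sInf_le (hc.symm.isCoatom_iff_isAtom.mpr (hsAtom a ha)))
  exact hc.disjoint.eq_bot_of_le hac

theorem IsCoatom.sup_finset_inf_eq_top {α ι : Type*} [DistribLattice α] [BoundedOrder α] {a : α}
    (ha : IsCoatom a) (s : Finset ι) (f : ι → α) (hf : ∀ i ∈ s, IsCoatom (f i) ∧ f i ≠ a) :
    a ⊔ s.inf f = ⊤ := by
  rw [Finset.inf_sup_distrib_left, Finset.inf_eq_top_iff]
  exact fun i hi => ha.sup_eq_top_of_ne (hf i hi).1 (hf i hi).2.symm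

namespace LieSubmodule

variable {R L M ι : Type*} [CommRing R] [LieRing L] [AddCommGroup M] [Module R M]
  [LieRingModule L M]

theorem injective_pi_mk_of_iInf_eq_bot (N : ι → LieSubmodule R L M) (h : ⨅ i, N i = ⊥) :
    Injective fun (x : M) i => (Quotient.mk x : M ⧸ N i) := by
  intro x y hxy
  rw [← sub_eq_zero, ← mem_bot (R := R) (L := L), ← h, mem_iInf]
  exact fun i => (Quotient.mk_eq_zero' (N := N i)).mp (by simpa [sub_eq_zero] using congrFun hxy i)

theorem surjective_pi_mk_of_sup_inf_erase_eq_top [LieAlgebra R L] [LieModule R L M] [Fintype ι]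
    [DecidableEq ι] (N : ι → LieSubmodule R L M)
    (h : ∀ i, N i ⊔ (Finset.univ.erase i).inf N = ⊤) :
    Surjective fun (x : M) i => (Quotient.mk x : M ⧸ N i) := by
  intro g
  have lift : ∀ i, ∃ y ∈ (Finset.univ.erase i).inf N, (Quotient.mk y : M ⧸ N i) = g i := by
    intro i
    obtain ⟨x, hx⟩ := Quotient.surjective_mk' (N i) (g i)
    obtain ⟨u, hu, v, hv, rfl⟩ := (mem_sup _ _ x).mp (h i ▸ mem_top x)
    refine ⟨v, hv, hx ▸ ?_⟩
    simp [Quotient.mk_eq_zero'.mpr hu]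
  choose y hyN hy using lift
  refine ⟨∑ i, y i, funext fun i => ?_⟩
  have hyj : ∀ j ≠ i, y j ∈ N i := fun j hji =>
    Finset.inf_le (f := N) (Finset.mem_erase.mpr ⟨hji.symm, Finset.mem_univ i⟩) (hyN j)
  simp only [← Quotient.mk'_apply, map_sum]
  rw [Fintype.sum_eq_single i fun j hji => by simpa using hyj j hji]
  exact hy i

end LieSubmodule

theorem LieAlgebra.IsSemisimple.finite_setOf_isCoatom {R L : Type*} [CommRing R] [LieRing L]
    [LieAlgebra R L] [IsNoetherian R L] [LieAlgebra.IsSemisimple R L] :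
    {I : LieIdeal R L | IsCoatom I}.Finite :=
  (WellFoundedGT.finite_of_sSupIndep sSupIndep_isAtom).preimage compl_injective.injOn
    |>.subset fun _ hI => isAtom_compl.mpr hI

theorem stmt6_general {k L : Type*} [Field k] [LieRing L] [LieAlgebra k L]
    [FiniteDimensional k L] [LieAlgebra.IsSemisimple k L]
    (Spec : Set (LieIdeal k L))
    (hSpec : Spec = {I : LieIdeal k L | I ≠ ⊤ ∧ ∀ J : LieIdeal k L, I ≤ J → J = I ∨ J = ⊤})
    (F : L → ∀ I : Spec, L ⧸ (I : LieIdeal k L))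
    (hF : ∀ (x : L) (I : Spec), F x I = LieSubmodule.Quotient.mk (N := (I : LieIdeal k L)) x) :
    Spec.Finite ∧ Function.Bijective F ∧
      (∀ (x y : L) (I : Spec), F ⁅x, y⁆ I = ⁅F x I, F y I⁆) ∧
      (∀ (c : k) (x : L), F (c • x) = c • F x) ∧
      (∀ x y : L, F (x + y) = F x + F y) := by
  obtain rfl : Spec = {I | IsCoatom I} :=
    hSpec.trans (Set.ext fun _ => isCoatom_iff_forall_le_eq_or_eq_top.symm)
  obtain rfl : F = fun x I => LieSubmodule.Quotient.mk x := funext fun x => funext (hF x)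
  have hfin := LieAlgebra.IsSemisimple.finite_setOf_isCoatom (R := k) (L := L)
  have := hfin.fintype
  classical
  refine ⟨hfin, ⟨?_, ?_⟩, fun x y I => LieSubmodule.Quotient.mk_bracket I.1 x y, fun _ _ => rfl,
    fun _ _ => rfl⟩
  · refine LieSubmodule.injective_pi_mk_of_iInf_eq_bot _ ?_
    rw [← sInf_eq_iInf', sInf_setOf_isCoatom_eq_bot]
  · refine LieSubmodule.surjective_pi_mk_of_sup_inf_erase_eq_top _ fun I => ?_
    exact I.2.sup_finset_inf_eq_top _ _ fun J hJ =>
      ⟨J.2, Subtype.coe_injective.ne (Finset.ne_of_mem_erase hJ)⟩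

/-- For a finite-dimensional semisimple Lie algebra `𝔨` in characteristic 0,
`Spec 𝔨` (the set of maximal ideals) is finite and the canonical map
`𝔨 → ∏_{I ∈ Spec 𝔨} 𝔨/I` is an isomorphism of Lie algebras. -/
theorem stmt6 {k L : Type*} [Field k] [CharZero k] [LieRing L] [LieAlgebra k L]
    [FiniteDimensional k L] [LieAlgebra.IsSemisimple k L]
    (Spec : Set (LieIdeal k L))
    (hSpec : Spec = {I : LieIdeal k L | I ≠ ⊤ ∧ ∀ J : LieIdeal k L, I ≤ J → J = I ∨ J = ⊤})
    (F : L → ∀ I : Spec, L ⧸ (I : LieIdeal k L))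
    (hF : ∀ (x : L) (I : Spec), F x I = LieSubmodule.Quotient.mk (N := (I : LieIdeal k L)) x) :
    Spec.Finite ∧ Function.Bijective F ∧
      (∀ (x y : L) (I : Spec), F ⁅x, y⁆ I = ⁅F x I, F y I⁆) ∧
      (∀ (c : k) (x : L), F (c • x) = c • F x) ∧
      (∀ x y : L, F (x + y) = F x + F y) :=
  stmt6_general Spec hSpec F hF
end

section
/- Let 𝔤 be a Lie algebra over a field k, D a derivation of 𝔤, ψ : 𝔤 × 𝔤 → k a 2-cocycle on 𝔤, and f : 𝔤 → k a linear map satisfying f([ξ,η]) = ψ(D ξ, η) + ψ(ξ, D η) for all ξ, η ∈ 𝔤. Then the alternating bilinear extension ω of ψ to 𝔤 ⋊_D k determined by ω((ξ,0),(η,0)) = ψ(ξ,η) and ω((0,1),(ξ,0)) = f(ξ) is a 2-cocycle on 𝔤 ⋊_D k. -/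
/-!
Expanding the cyclic sum of `ω` over `(ξ,s), (η,t), (ζ,r)`, the terms `f (D ·)` cancel in pairs,
and by skew-symmetry of `ψ` what remains is the cocycle sum of `ψ` on `ξ, η, ζ` plus
`s · (ψ (D η) ζ + ψ η (D ζ) - f ⁅η, ζ⁆)` and its two cyclic permutations, each of which vanishes
by the hypothesis on `f`.
-/

section SemidirectExtension

variable {k g : Type*} [CommRing k] [LieRing g] [Module k g]

def semidirectBracket (D : g →ₗ[k] g) (u v : g × k) : g × k :=
  (⁅u.1, v.1⁆ + u.2 • D v.1 - v.2 • D u.1, 0)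

/-- The alternating extension of `ψ` to `𝔤 × k` with `ω ((0,1), (ξ,0)) = f ξ`. -/
def extendForm (ψ : g →ₗ[k] g →ₗ[k] k) (f : g →ₗ[k] k) (u v : g × k) : k :=
  ψ u.1 v.1 + u.2 * f v.1 - v.2 * f u.1

variable {D : g →ₗ[k] g} {ψ : g →ₗ[k] g →ₗ[k] k} {f : g →ₗ[k] k}

theorem extendForm_self (hψ : ψ.IsAlt) (u : g × k) : extendForm ψ f u u = 0 := by
  simp [extendForm, hψ.self_eq_zero]

theorem extendForm_cocycle (hψ : ψ.IsAlt)
    (hψcoc : ∀ x y z : g, ψ ⁅x, y⁆ z + ψ ⁅y, z⁆ x + ψ ⁅z, x⁆ y = 0)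
    (hf : ∀ ξ η : g, f ⁅ξ, η⁆ = ψ (D ξ) η + ψ ξ (D η)) (u v w : g × k) :
    extendForm ψ f (semidirectBracket D u v) w + extendForm ψ f (semidirectBracket D v w) u +
      extendForm ψ f (semidirectBracket D w u) v = 0 := by
  simp only [extendForm, semidirectBracket, map_add, map_sub, map_smul, LinearMap.add_apply,
    LinearMap.sub_apply, LinearMap.smul_apply, smul_eq_mul, hf]
  linear_combination hψcoc u.1 v.1 w.1 + u.2 * hψ.neg (D w.1) v.1
    + v.2 * hψ.neg (D u.1) w.1 + w.2 * hψ.neg (D v.1) u.1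

end SemidirectExtension

theorem stmt13_general {k g : Type*} [Field k] [LieRing g] [LieAlgebra k g]
    (D : g →ₗ[k] g)
    (ψ : g →ₗ[k] g →ₗ[k] k)
    (hψalt : ∀ x : g, ψ x x = 0)
    (hψcoc : ∀ x y z : g, ψ ⁅x, y⁆ z + ψ ⁅y, z⁆ x + ψ ⁅z, x⁆ y = 0)
    (f : g →ₗ[k] k)
    (hf : ∀ ξ η : g, f ⁅ξ, η⁆ = ψ (D ξ) η + ψ ξ (D η))
    (br : g × k → g × k → g × k)
    (hbr : ∀ u v : g × k, br u v = (⁅u.1, v.1⁆ + u.2 • D v.1 - v.2 • D u.1, 0))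
    (ω : g × k → g × k → k)
    (hω : ∀ u v : g × k, ω u v = ψ u.1 v.1 + u.2 * f v.1 - v.2 * f u.1) :
    (∀ u : g × k, ω u u = 0) ∧
    (∀ u v w : g × k, ω (br u v) w + ω (br v w) u + ω (br w u) v = 0) := by
  obtain rfl : br = semidirectBracket D := funext fun u => funext (hbr u)
  obtain rfl : ω = extendForm ψ f := funext fun u => funext (hω u)
  exact ⟨extendForm_self hψalt, extendForm_cocycle hψalt hψcoc hf⟩

/-- Given a 2-cocycle `ψ` on `𝔤` and a linear `f` with
`f([ξ,η]) = ψ(Dξ,η) + ψ(ξ,Dη)`, the extension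
`ω((ξ,s),(η,t)) = ψ(ξ,η) + s·f(η) − t·f(ξ)` is a 2-cocycle on `𝔤 ⋊_D k`. -/
theorem stmt13 {k g : Type*} [Field k] [LieRing g] [LieAlgebra k g]
    (D : g →ₗ[k] g) (hD : ∀ x y : g, D ⁅x, y⁆ = ⁅D x, y⁆ + ⁅x, D y⁆)
    (ψ : g →ₗ[k] g →ₗ[k] k)
    (hψalt : ∀ x : g, ψ x x = 0)
    (hψcoc : ∀ x y z : g, ψ ⁅x, y⁆ z + ψ ⁅y, z⁆ x + ψ ⁅z, x⁆ y = 0)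
    (f : g →ₗ[k] k)
    (hf : ∀ ξ η : g, f ⁅ξ, η⁆ = ψ (D ξ) η + ψ ξ (D η))
    (br : g × k → g × k → g × k)
    (hbr : ∀ u v : g × k, br u v = (⁅u.1, v.1⁆ + u.2 • D v.1 - v.2 • D u.1, 0))
    (ω : g × k → g × k → k)
    (hω : ∀ u v : g × k, ω u v = ψ u.1 v.1 + u.2 * f v.1 - v.2 * f u.1) :
    (∀ u : g × k, ω u u = 0) ∧
    (∀ u v w : g × k, ω (br u v) w + ω (br v w) u + ω (br w u) v = 0) :=
  stmt13_general D ψ hψalt hψcoc f hf br hbr ω hω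
end

section
/- Let 𝔤 be a Lie algebra over a field k with a derivation D, and let ω be a 2-cocycle on 𝔥 = 𝔤 ⋊_D k whose restriction to 𝔤 × 𝔤 vanishes. If 𝔤 is perfect, then ω = 0. -/
/-!
With `e = (0, 1)`, the cocycle identity on `(a, 0), (b, 0), e` reads
`ω ((⁅a, b⁆, 0), e) = ω ((D b, 0), (a, 0)) - ω ((D a, 0), (b, 0))`, and the right-hand side
vanishes because `ω` vanishes on `𝔤 × 𝔤`. Hence `ω (·, e)` vanishes on `[𝔤, 𝔤] = 𝔤`; with
`ω (e, e) = 0` and skew-symmetry, `ω` vanishes on all pairs from `𝔤 × 0` and `k e`.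
-/

namespace LieDerivationExtension

variable {k g : Type*} [CommRing k] [LieRing g] [LieAlgebra k g]

def bracket (D : g →ₗ[k] g) (u v : g × k) : g × k :=
  (⁅u.1, v.1⁆ + u.2 • D v.1 - v.2 • D u.1, 0)

def IsCocycle (D : g →ₗ[k] g) (ω : g × k →ₗ[k] g × k →ₗ[k] k) : Prop :=
  ∀ u v w, ω (bracket D u v) w + ω (bracket D v w) u + ω (bracket D w u) v = 0

variable {D : g →ₗ[k] g} {ω : g × k →ₗ[k] g × k →ₗ[k] k}

theorem IsCocycle.apply_lie_unit_eq_zero (hω : IsCocycle D ω)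
    (hres : ∀ ξ η : g, ω (ξ, 0) (η, 0) = 0) (a b : g) :
    ω (⁅a, b⁆, 0) (0, 1) = 0 := by
  simpa [bracket, hres] using hω (a, 0) (b, 0) (0, 1)

theorem IsCocycle.apply_unit_eq_zero (hω : IsCocycle D ω)
    (hperf : Submodule.span k {z : g | ∃ a b : g, z = ⁅a, b⁆} = ⊤)
    (hres : ∀ ξ η : g, ω (ξ, 0) (η, 0) = 0) (x : g) :
    ω (x, 0) (0, 1) = 0 := by
  have : (ω.flip (0, 1)).comp (LinearMap.inl k g k) = 0 :=
    LinearMap.ext_on hperf (by rintro _ ⟨a, b, rfl⟩; exact hω.apply_lie_unit_eq_zero hres a b)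
  exact LinearMap.congr_fun this x

theorem IsCocycle.eq_zero (hω : IsCocycle D ω) (halt : ω.IsAlt)
    (hperf : Submodule.span k {z : g | ∃ a b : g, z = ⁅a, b⁆} = ⊤)
    (hres : ∀ ξ η : g, ω (ξ, 0) (η, 0) = 0) : ω = 0 := by
  have hunit := hω.apply_unit_eq_zero hperf hres
  ext x y
  · exact hres x y
  · exact hunit x
  · exact halt.isRefl _ _ (hunit x)
  · exact halt _

end LieDerivationExtension

theorem stmt14_general {k g : Type*} [Field k] [LieRing g] [LieAlgebra k g]
    (D : g →ₗ[k] g)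
    (hperf : ∀ x : g, x ∈ Submodule.span k {z : g | ∃ a b : g, z = ⁅a, b⁆})
    (br : g × k → g × k → g × k)
    (hbr : ∀ u v : g × k, br u v = (⁅u.1, v.1⁆ + u.2 • D v.1 - v.2 • D u.1, 0))
    (ω : g × k →ₗ[k] g × k →ₗ[k] k)
    (halt : ∀ u : g × k, ω u u = 0)
    (hcoc : ∀ u v w : g × k, ω (br u v) w + ω (br v w) u + ω (br w u) v = 0)
    (hres : ∀ ξ η : g, ω (ξ, 0) (η, 0) = 0) :
    ω = 0 := by
  obtain rfl : br = LieDerivationExtension.bracket D := funext₂ hbr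
  exact LieDerivationExtension.IsCocycle.eq_zero hcoc halt (Submodule.eq_top_iff'.mpr hperf) hres

/-- A 2-cocycle on `𝔤 ⋊_D k` vanishing on `𝔤 × 𝔤` vanishes if `𝔤` is perfect. -/
theorem stmt14 {k g : Type*} [Field k] [LieRing g] [LieAlgebra k g]
    (D : g →ₗ[k] g) (hD : ∀ x y : g, D ⁅x, y⁆ = ⁅D x, y⁆ + ⁅x, D y⁆)
    (hperf : ∀ x : g, x ∈ Submodule.span k {z : g | ∃ a b : g, z = ⁅a, b⁆})
    (br : g × k → g × k → g × k)
    (hbr : ∀ u v : g × k, br u v = (⁅u.1, v.1⁆ + u.2 • D v.1 - v.2 • D u.1, 0))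
    (ω : g × k →ₗ[k] g × k →ₗ[k] k)
    (halt : ∀ u : g × k, ω u u = 0)
    (hcoc : ∀ u v w : g × k, ω (br u v) w + ω (br v w) u + ω (br w u) v = 0)
    (hres : ∀ ξ η : g, ω (ξ, 0) (η, 0) = 0) :
    ω = 0 :=
  stmt14_general D hperf br hbr ω halt hcoc hres
end
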